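/- The value SCI_n(Γ)(v) = ⟨[v], w_Γ⟩ is independent of the choice of the marked base point on the curve Γ: if w and w′ are two signed words obtained from the same generic curve by different choices of base point, then w ∼ w′ (they are cyclically equivalent via iterated ν-shifts), and hence ⟨[v], w⟩ = ⟨[v], w′⟩ for every signed word v. -/

import Mathlib

/-!
On a word without bars, `ν (c :: t) = ((c :: t).map (flipAt c.1)).rotate 1`: the shift flips
the sign of every letter with the index of the head and rotates the head to the end. Iterating
along a prefix `p` therefore flips each letter once per letter of `p` with the same index; in a
signed word every index occurs exactly twice, so `ν^[|v|] v = v` and `ν` permutes the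
representatives of `[v]`.

The subwords of `a :: x` are the subwords `t` of `x` and the words `a :: t`; those of `ν (a :: x)`
are the flipped `t` and the words `ν (a :: t)`. A subword containing only one occurrence of `a`
matches no signed word, so the first kinds contribute equally. Isomorphism of words without bars is
unchanged by flipping both at their heads and rotating both, so `u ≅ a :: t` iff
`ν u ≅ ν (a :: t)`, and the second kinds agree after reindexing `[v]` by `ν`.
-/

/-- The bar involution on the alphabet 𝒜 = {X_j, X̄_j : j ∈ ℕ}: a letter is a pair
(index, sign) where sign `true` means X_j and `false` means X̄_j. -/
def bar (a : ℕ × Bool) : ℕ × Bool := (a.1, !a.2)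

/-- A signed word: each letter occurring in it occurs exactly twice, and a letter
never occurs together with its barred partner. -/
def IsSignedWord (w : List (ℕ × Bool)) : Prop :=
  (∀ a ∈ w, w.count a = 2) ∧ ∀ a ∈ w, bar a ∉ w

/-- Isomorphism of signed words: a bijection of the alphabet carrying one word to the
other and preserving the signs of the letters occurring in the word. -/
def SWIso (w w' : List (ℕ × Bool)) : Prop :=
  ∃ f : ℕ × Bool → ℕ × Bool, Function.Bijective f ∧ w' = w.map f ∧
    ∀ a ∈ w, (f a).2 = a.2

/-- The ν-shift: ν(A x A y) = x Ā y Ā. -/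
def nuShift : List (ℕ × Bool) → List (ℕ × Bool)
  | [] => []
  | a :: rest => (rest.map fun b => if b = a then bar a else b) ++ [bar a]

open scoped Classical in
/-- ⟨u, w⟩ : the number of subwords of w (sublists obtained by deleting both
occurrences of each deleted letter) isomorphic to u. -/
noncomputable def pairing (u w : List (ℕ × Bool)) : ℕ :=
  (w.sublists.filter fun v => decide (SWIso u v)).length

/-- The set of representatives of the cyclic equivalence class of v
(the orbit of v under the ν-shift). -/
def cyclicClass (v : List (ℕ × Bool)) : Finset (List (ℕ × Bool)) :=
  (Finset.range (v.length + 1)).image fun l => nuShift^[l] v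

/-- ⟨[v], w⟩ : the pairing of the class sum [v] with w. -/
noncomputable def bracketPairing (v w : List (ℕ × Bool)) : ℕ :=
  ∑ u ∈ cyclicClass v, pairing u w

abbrev Letter := ℕ × Bool

@[simp] lemma bar_fst (a : Letter) : (bar a).1 = a.1 := rfl

@[simp] lemma bar_bar (a : Letter) : bar (bar a) = a := by simp [bar]

lemma eq_or_eq_bar_of_fst_eq {a b : Letter} (h : a.1 = b.1) : a = b ∨ a = bar b := by
  obtain ⟨i, s⟩ := a
  obtain ⟨j, t⟩ := b
  cases s <;> cases t <;> simp_all [bar]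

def NoBars (w : List Letter) : Prop := ∀ a ∈ w, bar a ∉ w

lemma IsSignedWord.noBars {w : List Letter} (hw : IsSignedWord w) : NoBars w := hw.2

lemma NoBars.subset {w w' : List Letter} (hw : NoBars w) (h : w' ⊆ w) : NoBars w' :=
  fun a ha hb => hw a (h ha) (h hb)

lemma NoBars.eq_of_fst_eq {w : List Letter} (hw : NoBars w) {a b : Letter} (ha : a ∈ w)
    (hb : b ∈ w) (h : a.1 = b.1) : a = b :=
  (eq_or_eq_bar_of_fst_eq h).resolve_right fun hab => hw b hb (hab ▸ ha)

lemma NoBars.map {w : List Letter} (hw : NoBars w) {g : Letter → Letter}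
    (hg : Function.Injective g) (hbar : ∀ a, g (bar a) = bar (g a)) : NoBars (w.map g) := by
  simp only [NoBars, List.mem_map]
  rintro _ ⟨a, ha, rfl⟩ ⟨b, hb, hba⟩
  rw [← hbar, hg.eq_iff] at hba
  exact hw a ha (hba ▸ hb)

lemma IsSignedWord.map {w : List Letter} (hw : IsSignedWord w) {g : Letter → Letter}
    (hg : Function.Injective g) (hbar : ∀ a, g (bar a) = bar (g a)) :
    IsSignedWord (w.map g) := by
  refine ⟨?_, hw.noBars.map hg hbar⟩
  simp only [List.mem_map]
  rintro _ ⟨a, ha, rfl⟩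
  rw [List.count_map_of_injective _ _ hg, hw.1 a ha]

lemma IsSignedWord.perm {w w' : List Letter} (hw : IsSignedWord w) (h : w.Perm w') :
    IsSignedWord w' :=
  ⟨fun a ha => h.count_eq a ▸ hw.1 a (h.mem_iff.2 ha),
    fun a ha hb => hw.2 a (h.mem_iff.2 ha) (h.mem_iff.2 hb)⟩

def flipAt (j : ℕ) (x : Letter) : Letter := if x.1 = j then bar x else x

@[simp] lemma flipAt_fst (j : ℕ) (x : Letter) : (flipAt j x).1 = x.1 := by
  unfold flipAt; split_ifs <;> rfl

lemma flipAt_snd (j : ℕ) (x : Letter) : (flipAt j x).2 = if x.1 = j then !x.2 else x.2 := by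
  unfold flipAt; split_ifs <;> rfl

lemma flipAt_involutive (j : ℕ) : Function.Involutive (flipAt j) := by
  intro x
  by_cases h : x.1 = j <;> simp [flipAt, h]

lemma flipAt_bar (j : ℕ) (x : Letter) : flipAt j (bar x) = bar (flipAt j x) := by
  by_cases h : x.1 = j <;> simp [flipAt, h]

lemma nuShift_map {g : Letter → Letter} (hg : Function.Injective g)
    (hbar : ∀ a, g (bar a) = bar (g a)) (w : List Letter) :
    nuShift (w.map g) = (nuShift w).map g := by
  cases w with
  | nil => rfl
  | cons a t =>
    simp only [nuShift, List.map_cons, List.map_append, List.map_map, List.map_nil, hbar]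
    congr 2
    funext b
    simp only [Function.comp_apply, hg.eq_iff]
    split_ifs <;> simp [hbar]

@[simp] lemma length_nuShift (w : List Letter) : (nuShift w).length = w.length := by
  cases w <;> simp [nuShift]

lemma nuShift_cons_of_bar_notMem {c : Letter} {t : List Letter} (h : bar c ∉ t) :
    nuShift (c :: t) = (t ++ [c]).map (flipAt c.1) := by
  simp only [nuShift, List.map_append, List.map_cons, List.map_nil]
  congr 1
  · refine List.map_congr_left fun b hb => ?_
    rcases eq_or_ne b.1 c.1 with hbc | hbc
    · obtain rfl | rfl := eq_or_eq_bar_of_fst_eq hbc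
      · simp [flipAt]
      · exact absurd hb h
    · simp [flipAt, hbc, show b ≠ c by rintro rfl; exact hbc rfl]
  · simp [flipAt]

lemma nuShift_cons_eq_rotate {c : Letter} {t : List Letter} (h : NoBars (c :: t)) :
    nuShift (c :: t) = ((c :: t).map (flipAt c.1)).rotate 1 := by
  rw [nuShift_cons_of_bar_notMem fun hc => h c List.mem_cons_self (List.mem_cons_of_mem c hc),
    ← List.map_rotate, List.rotate_cons_succ, List.rotate_zero]

lemma isSignedWord_nuShift {w : List Letter} (hw : IsSignedWord w) :
    IsSignedWord (nuShift w) := by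
  cases w with
  | nil => exact hw
  | cons c t =>
    rw [nuShift_cons_eq_rotate hw.noBars]
    exact ((hw.map (flipAt_involutive c.1).injective (flipAt_bar c.1)).perm
      (List.rotate_perm _ 1).symm)

lemma isSignedWord_iterate_nuShift {w : List Letter} (hw : IsSignedWord w) (k : ℕ) :
    IsSignedWord (nuShift^[k] w) := by
  induction k with
  | zero => exact hw
  | succ k ih => rw [Function.iterate_succ_apply']; exact isSignedWord_nuShift ih

def flipAlong (p : List Letter) (x : Letter) : Letter := bar^[p.countP (fun y => y.1 = x.1)] x

@[simp] lemma iterate_bar_fst (n : ℕ) (x : Letter) : (bar^[n] x).1 = x.1 := by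
  induction n generalizing x with
  | zero => rfl
  | succ n ih => rw [Function.iterate_succ_apply, ih, bar_fst]

lemma flipAt_flipAlong (c : Letter) (p : List Letter) (x : Letter) :
    flipAt c.1 (flipAlong p x) = flipAlong (c :: p) x := by
  by_cases h : x.1 = c.1
  · simp [flipAlong, flipAt, h, Function.iterate_succ_apply']
  · simp [flipAlong, flipAt, h, Ne.symm h]

lemma nuShift_iterate_length_append {p q : List Letter} (h : NoBars (p ++ q)) :
    nuShift^[p.length] (p ++ q) = (q ++ p).map (flipAlong p) := by
  induction p generalizing q with
  | nil =>
    have : flipAlong [] = id := rfl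
    simp [this]
  | cons c p ih =>
    have hc : bar c ∉ p ++ q := fun hc => h c List.mem_cons_self (List.mem_cons_of_mem c hc)
    have hcomm : Function.Commute nuShift (List.map (flipAt c.1)) := fun w =>
      nuShift_map (flipAt_involutive c.1).injective (flipAt_bar c.1) w
    have hrest : NoBars (p ++ (q ++ [c])) := h.subset fun x hx => by simp at hx ⊢; tauto
    calc nuShift^[p.length + 1] (c :: (p ++ q))
        = nuShift^[p.length] ((p ++ (q ++ [c])).map (flipAt c.1)) := by
          rw [Function.iterate_succ_apply, nuShift_cons_of_bar_notMem hc, List.append_assoc]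
      _ = ((q ++ [c] ++ p).map (flipAlong p)).map (flipAt c.1) := by
          rw [hcomm.iterate_left, ih hrest]
      _ = (q ++ c :: p).map (flipAlong (c :: p)) := by
          simp only [List.map_map, List.append_assoc, List.singleton_append]
          exact List.map_congr_left fun x _ => flipAt_flipAlong c p x

lemma IsSignedWord.isPeriodicPt_nuShift {w : List Letter} (hw : IsSignedWord w) :
    Function.IsPeriodicPt nuShift w.length w := by
  have h := nuShift_iterate_length_append (p := w) (q := []) (by simpa using hw.noBars)
  rw [List.append_nil, List.nil_append] at h
  refine h.trans ((List.map_congr_left fun x hx => ?_).trans (List.map_id w))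
  have hcount : w.countP (fun y => y.1 = x.1) = 2 := by
    rw [← hw.1 x hx, List.count]
    refine List.countP_congr fun y hy => ?_
    simpa using ⟨hw.noBars.eq_of_fst_eq hy hx, fun h => h ▸ rfl⟩
  simp [flipAlong, hcount]

lemma IsSignedWord.iterate_pred_length_nuShift {u : List Letter} (hu : IsSignedWord u) :
    nuShift^[u.length - 1] (nuShift u) = u := by
  cases u with
  | nil => rfl
  | cons c t => rw [← Function.iterate_succ_apply]; exact hu.isPeriodicPt_nuShift

lemma IsSignedWord.nuShift_iterate_pred_length {u : List Letter} (hu : IsSignedWord u) :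
    nuShift (nuShift^[u.length - 1] u) = u := by
  cases u with
  | nil => rfl
  | cons c t => rw [← Function.iterate_succ_apply' nuShift]; exact hu.isPeriodicPt_nuShift

lemma mem_cyclicClass_iff {v u : List Letter} (hv : IsSignedWord v) :
    u ∈ cyclicClass v ↔ ∃ l, nuShift^[l] v = u := by
  simp only [cyclicClass, Finset.mem_image, Finset.mem_range]
  refine ⟨fun ⟨l, _, hl⟩ => ⟨l, hl⟩, fun ⟨l, hl⟩ => ?_⟩
  rcases v.length.eq_zero_or_pos with h0 | h0
  · rw [List.length_eq_zero_iff.1 h0] at hl ⊢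
    exact ⟨0, Nat.zero_lt_one, hl ▸ (Function.iterate_fixed rfl l).symm⟩
  · exact ⟨l % v.length, (Nat.mod_lt l h0).trans (Nat.lt_succ_self _),
      (hv.isPeriodicPt_nuShift.iterate_mod_apply l).trans hl⟩

lemma isSignedWord_of_mem_cyclicClass {v u : List Letter} (hv : IsSignedWord v)
    (hu : u ∈ cyclicClass v) : IsSignedWord u := by
  obtain ⟨l, rfl⟩ := (mem_cyclicClass_iff hv).1 hu
  exact isSignedWord_iterate_nuShift hv l

lemma sum_cyclicClass_comp_nuShift {M : Type*} [AddCommMonoid M] {v : List Letter}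
    (hv : IsSignedWord v) (g : List Letter → M) :
    ∑ u ∈ cyclicClass v, g (nuShift u) = ∑ u ∈ cyclicClass v, g u := by
  refine Finset.sum_nbij' nuShift (fun u => nuShift^[u.length - 1] u) ?_ ?_ ?_ ?_ fun _ _ => rfl
  all_goals
    intro u hu
    obtain ⟨l, rfl⟩ := (mem_cyclicClass_iff hv).1 hu
  · exact (mem_cyclicClass_iff hv).2 ⟨l + 1, Function.iterate_succ_apply' _ _ _⟩
  · exact (mem_cyclicClass_iff hv).2 ⟨_, Function.iterate_add_apply _ _ _ _⟩
  · rw [length_nuShift]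
    exact (isSignedWord_iterate_nuShift hv l).iterate_pred_length_nuShift
  · exact (isSignedWord_iterate_nuShift hv l).nuShift_iterate_pred_length

lemma SWIso.length_eq {u s : List Letter} (h : SWIso u s) : u.length = s.length := by
  obtain ⟨f, -, rfl, -⟩ := h
  exact (List.length_map f).symm

lemma SWIso.count_eq_two {u s : List Letter} (h : SWIso u s) (hu : IsSignedWord u) {d : Letter}
    (hd : d ∈ s) : s.count d = 2 := by
  obtain ⟨f, hf, rfl, -⟩ := h
  obtain ⟨a, ha, rfl⟩ := List.mem_map.1 hd
  rw [List.count_map_of_injective _ _ hf.injective, hu.1 a ha]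

lemma swIso_rotate_iff {u s : List Letter} (n : ℕ) :
    SWIso (u.rotate n) (s.rotate n) ↔ SWIso u s := by
  refine exists_congr fun f => and_congr_right fun _ => and_congr ?_ ?_
  · rw [List.map_rotate, List.rotate_eq_rotate]
  · simp only [List.mem_rotate]

lemma SWIso.map_flipAt_cons {b c : Letter} {t t' : List Letter} (hu : NoBars (b :: t))
    (hs : NoBars (c :: t')) (h : SWIso (b :: t) (c :: t')) :
    SWIso ((b :: t).map (flipAt b.1)) ((c :: t').map (flipAt c.1)) := by
  obtain ⟨f, hf, hfs, hsign⟩ := h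
  have hfb : f b = c := (List.cons.inj hfs).1.symm
  have hfst : ∀ a ∈ b :: t, (f a).1 = c.1 ↔ a.1 = b.1 := fun a ha =>
    ⟨fun hac => congrArg Prod.fst (hf.injective <| hfb ▸
        hs.eq_of_fst_eq (hfs ▸ List.mem_map_of_mem ha) List.mem_cons_self hac),
      fun hab => hu.eq_of_fst_eq ha List.mem_cons_self hab ▸ congrArg Prod.fst hfb⟩
  refine ⟨flipAt c.1 ∘ f ∘ flipAt b.1,
    ((flipAt_involutive _).bijective.comp hf).comp (flipAt_involutive _).bijective, ?_, ?_⟩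
  · rw [hfs, List.map_map, List.map_map]
    exact List.map_congr_left fun x _ => by simp [flipAt_involutive b.1 x]
  · simp only [List.mem_map, Function.comp_apply]
    rintro _ ⟨a, ha, rfl⟩
    rw [flipAt_involutive, flipAt_snd, flipAt_snd, hsign a ha, if_congr (hfst a ha) rfl rfl]

lemma swIso_map_flipAt_cons_iff {b c : Letter} {t t' : List Letter} (hu : NoBars (b :: t))
    (hs : NoBars (c :: t')) :
    SWIso ((b :: t).map (flipAt b.1)) ((c :: t').map (flipAt c.1)) ↔
      SWIso (b :: t) (c :: t') := by
  refine ⟨fun h => ?_, SWIso.map_flipAt_cons hu hs⟩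
  have hflip (j : ℕ) := (flipAt_involutive j).injective
  rw [List.map_cons, List.map_cons] at h
  have := SWIso.map_flipAt_cons (by simpa using hu.map (hflip b.1) (flipAt_bar b.1))
    (by simpa using hs.map (hflip c.1) (flipAt_bar c.1)) h
  simpa [List.map_map, Function.comp_def, flipAt_involutive _ _] using this

lemma swIso_nuShift_iff {u s : List Letter} (hu : NoBars u) (hs : NoBars s) :
    SWIso (nuShift u) (nuShift s) ↔ SWIso u s := by
  cases u <;> cases s
  case nil.nil => rfl
  case cons.cons =>
    rw [nuShift_cons_eq_rotate hu, nuShift_cons_eq_rotate hs, swIso_rotate_iff,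
      swIso_map_flipAt_cons_iff hu hs]
  all_goals
    exact iff_of_false (fun h => by simpa using h.length_eq) (fun h => by simpa using h.length_eq)

section Pairing

open scoped Classical

lemma pairing_eq_countP (u w : List Letter) :
    pairing u w = w.sublists.countP fun s => SWIso u s := by
  rw [pairing, List.countP_eq_length_filter]

lemma pairing_cons (u : List Letter) (a : Letter) (x : List Letter) :
    pairing u (a :: x) =
      x.sublists.countP (fun t => SWIso u t) + x.sublists.countP (fun t => SWIso u (a :: t)) := by
  rw [pairing_eq_countP, (List.sublists_perm_sublists' _).countP_eq, List.sublists'_cons,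
    List.countP_append, List.countP_map, ← (List.sublists_perm_sublists' x).countP_eq,
    ← (List.sublists_perm_sublists' x).countP_eq]
  rfl

lemma swIso_map_flipAt_iff_of_sublist {u x t : List Letter} {a : Letter} (hu : IsSignedWord u)
    (hbar : bar a ∉ x) (hcount : x.count a = 1) (ht : t.Sublist x) :
    SWIso u (t.map (flipAt a.1)) ↔ SWIso u t := by
  by_cases hat : a ∈ t
  · have hlt : t.count a < 2 := (ht.count_le a).trans_lt (hcount ▸ Nat.one_lt_two)
    refine iff_of_false (fun h => ?_) (fun h => (h.count_eq_two hu hat).not_lt hlt)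
    have := h.count_eq_two hu (List.mem_map_of_mem hat)
    rw [List.count_map_of_injective _ _ (flipAt_involutive a.1).injective] at this
    exact this.not_lt hlt
  · suffices t.map (flipAt a.1) = t by rw [this]
    refine (List.map_congr_left fun b hb => ?_).trans (List.map_id t)
    have hba : b.1 ≠ a.1 := fun h => (eq_or_eq_bar_of_fst_eq h).elim
      (fun h => hat (h ▸ hb)) (fun h => hbar (h ▸ ht.subset hb))
    simp [flipAt, hba]

lemma pairing_nuShift_cons {u x : List Letter} {a : Letter} (hu : IsSignedWord u)
    (hw : IsSignedWord (a :: x)) :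
    pairing u (nuShift (a :: x)) = x.sublists.countP (fun t => SWIso u t) +
      x.sublists.countP (fun t => SWIso u (nuShift (a :: t))) := by
  have hbar : bar a ∉ x := fun h => hw.noBars a List.mem_cons_self (List.mem_cons_of_mem a h)
  have hcount : x.count a = 1 := by simpa using hw.1 a List.mem_cons_self
  rw [pairing_eq_countP, nuShift_cons_of_bar_notMem hbar, List.sublists_map, List.countP_map,
    List.sublists_concat, List.countP_append, List.countP_map]
  congr 1 <;> refine List.countP_congr fun t ht => ?_
  · simpa using swIso_map_flipAt_iff_of_sublist hu hbar hcount (List.mem_sublists.1 ht)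
  · rw [nuShift_cons_of_bar_notMem fun h => hbar ((List.mem_sublists.1 ht).subset h)]
    rfl

end Pairing

lemma bracketPairing_nuShift {v w : List Letter} (hv : IsSignedWord v) (hw : IsSignedWord w) :
    bracketPairing v (nuShift w) = bracketPairing v w := by
  classical
  cases w with
  | nil => rfl
  | cons a x =>
    have hnb (t) (ht : t ∈ x.sublists) : NoBars (a :: t) :=
      hw.noBars.subset (List.cons_subset_cons a (List.mem_sublists.1 ht).subset)
    unfold bracketPairing
    rw [Finset.sum_congr rfl fun u hu =>
        pairing_nuShift_cons (isSignedWord_of_mem_cyclicClass hv hu) hw,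
      Finset.sum_congr rfl fun u _ => pairing_cons u a x, Finset.sum_add_distrib,
      Finset.sum_add_distrib, ← sum_cyclicClass_comp_nuShift hv
        fun u => x.sublists.countP fun t => SWIso u (nuShift (a :: t))]
    congr 1
    refine Finset.sum_congr rfl fun u hu => List.countP_congr fun t ht => ?_
    simpa using swIso_nuShift_iff (isSignedWord_of_mem_cyclicClass hv hu).noBars (hnb t ht)

theorem base_point_independence_general (v w w' : List (ℕ × Bool))
    (hv : IsSignedWord v)
    (hw : IsSignedWord w)
    (hcyc : ∃ l : ℕ, nuShift^[l] w = w') :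
    bracketPairing v w = bracketPairing v w' := by
  obtain ⟨l, rfl⟩ := hcyc
  induction l with
  | zero => rfl
  | succ l ih =>
    rw [Function.iterate_succ_apply',
      bracketPairing_nuShift hv (isSignedWord_iterate_nuShift hw l), ih]

/-- SCI_n(Γ)(v) = ⟨[v], w_Γ⟩ is independent of the choice of base point: if w and w′
are signed words of the same generic curve for different base points, then w′ is
obtained from w by iterated ν-shifts, and ⟨[v], w⟩ = ⟨[v], w′⟩ for every signed
word v.  In particular this holds when w′ = ν(w) (take l = 1). -/
theorem base_point_independence (n : ℕ) (v w w' : List (ℕ × Bool))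
    (hv : IsSignedWord v)
    (hw : IsSignedWord w) (hlw : w.length = 2 * n)
    (hw' : IsSignedWord w')
    (hcyc : ∃ l : ℕ, nuShift^[l] w = w') :
    bracketPairing v w = bracketPairing v w' :=
  base_point_independence_general v w w' hv hw hcyc
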